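/- Let G be an amply regular graph with parameters (n, d, α, β), β > α ≥ 1, let xy ∈ E, let H be the transport-bipartite graph of xy, and let M be a perfect matching of H. If v_0 ∈ N_x and w_0 ∈ N_y are reachable in M, then d(v_0, w_0) ≤ ρ_M(v_0, w_0) - k, where ρ_M(v_0,w_0) is the reachable-distance of v_0 and w_0 in M, k = |C ∩ {x_1,...,x_{β-α-1}}|, and C is the reachable-chain between v_0 and w_0 in M. -/

import Mathlib

/-! The copies `x_i` of `x` are adjacent in `H` only to `Δ'_{xy}` and to other copies, so a
chain starting at `v₀ ∉ Δ_{xy}` and ending at `w₀ ∉ Δ_{xy}` neither begins nor ends with a copy.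
A chain with at least two intermediate vertices therefore has `ρ_M - k ≥ 3 ≥ d(v₀, w₀)`, the
last bound by the path `v₀ x y w₀`. A shorter chain contains no copy at all, and each of its
matching edges joins two equal or adjacent vertices of `G`, so it traces a walk of length at
most `ρ_M` from `v₀` to `w₀`. -/

variable {V : Type*}

/-- An amply regular graph with parameters `(n, d, a, b)`. -/
def IsAmplyRegular (G : SimpleGraph V) [Fintype V] [DecidableEq V] [DecidableRel G.Adj]
    (n d a b : ℕ) : Prop :=
  Fintype.card V = n ∧ G.IsRegularOfDegree d ∧
  (∀ x y : V, G.Adj x y → (G.neighborFinset x ∩ G.neighborFinset y).card = a) ∧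
  (∀ x y : V, G.dist x y = 2 → (G.neighborFinset x ∩ G.neighborFinset y).card = b)

/-- `N_x = Γ(x) \\ ({y} ∪ Γ(y))`: the neighbors of `x` other than `y` and not adjacent
to `y`. (`N_y` is `Nside G y x`.) -/
def Nside (G : SimpleGraph V) [Fintype V] [DecidableEq V] [DecidableRel G.Adj] (x y : V) :
    Finset V := G.neighborFinset x \ insert y (G.neighborFinset y)

/-- `Δ_{xy} = Γ(x) ∩ Γ(y)`: the common neighbors of `x` and `y`. -/
def Delta (G : SimpleGraph V) [Fintype V] [DecidableEq V] [DecidableRel G.Adj] (x y : V) :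
    Finset V := G.neighborFinset x ∩ G.neighborFinset y

/-- The `X`-side of the transport-bipartite graph of the edge `xy`:
`N_x ∪ Δ_{xy}` together with `m = β - α - 1` copies `x_1, …, x_m` of `x`. -/
abbrev TBX (G : SimpleGraph V) [Fintype V] [DecidableEq V] [DecidableRel G.Adj]
    (x y : V) (m : ℕ) :=
  {v : V // v ∈ Nside G x y ∪ Delta G x y} ⊕ Fin m

/-- The `Y`-side of the transport-bipartite graph of the edge `xy`:
`N_y ∪ Δ'_{xy}` together with `m = β - α - 1` copies `x'_1, …, x'_m` of `x`,
where `Δ'_{xy}` is a primed copy of `Δ_{xy}`. -/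
abbrev TBY (G : SimpleGraph V) [Fintype V] [DecidableEq V] [DecidableRel G.Adj]
    (x y : V) (m : ℕ) :=
  {v : V // v ∈ Nside G y x ∪ Delta G x y} ⊕ Fin m

/-- The edges of the transport-bipartite graph, from the `X`-side to the `Y`-side:
`E_1`-`E_3` and `E_5` are edges of `G` between `N_x ∪ Δ_{xy}` and `N_y ∪ Δ'_{xy}`;
`E_4` joins `z_i` to its primed copy `z'_i`; `E_6`-`E_8` join the copies of `x` to
everything in `Δ'_{xy}`, `Δ_{xy}` and the other copies respectively. -/
def tbAux (G : SimpleGraph V) [Fintype V] [DecidableEq V] [DecidableRel G.Adj]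
    (x y : V) (m : ℕ) (a : TBX G x y m) (b : TBY G x y m) : Prop :=
  match a, b with
  | Sum.inl v, Sum.inl w => G.Adj v.1 w.1 ∨ v.1 = w.1
  | Sum.inl v, Sum.inr _ => v.1 ∈ Delta G x y
  | Sum.inr _, Sum.inl w => w.1 ∈ Delta G x y
  | Sum.inr _, Sum.inr _ => True

/-- The transport-bipartite graph `H` of the edge `xy` (Definition 3.1). -/
def TBGraph (G : SimpleGraph V) [Fintype V] [DecidableEq V] [DecidableRel G.Adj]
    (x y : V) (m : ℕ) : SimpleGraph (TBX G x y m ⊕ TBY G x y m) where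
  Adj a b := match a, b with
    | Sum.inl a, Sum.inr b => tbAux G x y m a b
    | Sum.inr b, Sum.inl a => tbAux G x y m a b
    | _, _ => False
  symm := ⟨by rintro (a | a) (b | b) h <;> first | exact h | exact h.elim⟩
  loopless := ⟨by rintro (a | a) h <;> exact h⟩

noncomputable instance (G : SimpleGraph V) [Fintype V] [DecidableEq V] [DecidableRel G.Adj]
    (x y : V) (m : ℕ) (a : TBX G x y m ⊕ TBY G x y m) :
    Fintype ((TBGraph G x y m).neighborSet a) := Fintype.ofFinite _

/-- `Primed t t'` says the `Y`-side vertex `t'` is the primed copy of the `X`-side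
vertex `t` (so necessarily `t ∈ Δ_{xy} ∪ {x_1, …, x_m}`). -/
def Primed (G : SimpleGraph V) [Fintype V] [DecidableEq V] [DecidableRel G.Adj]
    (x y : V) (m : ℕ) : TBX G x y m → TBY G x y m → Prop
  | Sum.inl v, Sum.inl w => v.1 = w.1
  | Sum.inr i, Sum.inr j => i = j
  | _, _ => False

/-- `ChainM M a L w`: the list `L = [t_1, …, t_j]` is a reachable-chain from `a` to `w`
in the matching `M`, i.e. `a t'_1, t_1 t'_2, …, t_j w ∈ M` (or `a w ∈ M` when `L = []`),
where `t'_i` denotes the primed copy of `t_i`. -/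
inductive ChainM (G : SimpleGraph V) [Fintype V] [DecidableEq V] [DecidableRel G.Adj]
    (x y : V) (m : ℕ) (M : (TBGraph G x y m).Subgraph) :
    TBX G x y m → List (TBX G x y m) → TBY G x y m → Prop
  | nil {a w} : M.Adj (Sum.inl a) (Sum.inr w) → ChainM G x y m M a [] w
  | cons {a t t' L w} : M.Adj (Sum.inl a) (Sum.inr t') → Primed G x y m t t' →
      ChainM G x y m M t L w → ChainM G x y m M a (t :: L) w

/-- The `X`-side vertices which are copies `x_i` of `x`. -/
def isCopy (G : SimpleGraph V) [Fintype V] [DecidableEq V] [DecidableRel G.Adj]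
    (x y : V) (m : ℕ) : TBX G x y m → Bool
  | Sum.inl _ => false
  | Sum.inr _ => true

theorem List.countP_add_two_le_length {α : Type*} {p : α → Bool} {l : List α}
    (hl : l ≠ []) (hhead : p (l.head hl) = false) (hlast : p (l.getLast hl) = false)
    (hlen : 2 ≤ l.length) : l.countP p + 2 ≤ l.length := by
  obtain _ | ⟨a, l'⟩ := l
  · exact absurd rfl hl
  have hl' : l' ≠ [] := by rintro rfl; simp at hlen
  have hsplit : l' = l'.dropLast ++ [l'.getLast hl'] := (List.dropLast_append_getLast hl').symm
  rw [List.getLast_cons hl'] at hlast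
  have hcount : l'.countP p ≤ l'.dropLast.length := by
    rw [hsplit, List.countP_append]
    simpa [hlast] using List.countP_le_length (p := p) (l := l'.dropLast)
  simp only [List.head_cons] at hhead
  simp only [List.countP_cons, hhead, Bool.false_eq_true, if_false, List.length_cons,
    List.length_dropLast] at hcount hlen ⊢
  omega

theorem exists_walk_length_le_one_of_adj_or_eq {G : SimpleGraph V} {a b : V}
    (h : G.Adj a b ∨ a = b) :
    ∃ p : G.Walk a b, p.length ≤ 1 := by
  rcases h with h | rfl
  · exact ⟨h.toWalk, by simp⟩
  · exact ⟨.nil, by simp⟩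

section Transport

variable [Fintype V] [DecidableEq V] {G : SimpleGraph V} [DecidableRel G.Adj]
  {x y : V} {m : ℕ} {M : (TBGraph G x y m).Subgraph}

theorem Delta_comm (x y : V) : Delta G x y = Delta G y x :=
  Finset.inter_comm _ _

theorem adj_of_mem_Nside {v : V} (hv : v ∈ Nside G x y) : G.Adj x v := by
  simp only [Nside, Finset.mem_sdiff, SimpleGraph.mem_neighborFinset] at hv
  exact hv.1

theorem notMem_Delta_of_mem_Nside {v : V} (hv : v ∈ Nside G x y) : v ∉ Delta G x y := by
  simp only [Nside, Delta, Finset.mem_sdiff, Finset.mem_insert, Finset.mem_inter,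
    SimpleGraph.mem_neighborFinset] at hv ⊢
  exact fun h => hv.2 (Or.inr h.2)

namespace ChainM

theorem isCopy_head_eq_false {v : V} {hv : v ∈ Nside G x y ∪ Delta G x y}
    (hvΔ : v ∉ Delta G x y) {L : List (TBX G x y m)} {w : TBY G x y m}
    (hc : ChainM G x y m M (Sum.inl ⟨v, hv⟩) L w) (hL : L ≠ []) :
    isCopy G x y m (L.head hL) = false := by
  obtain _ | @⟨_, t, t', _, _, hadj, hprimed, _⟩ := hc
  · exact absurd rfl hL
  obtain ⟨_⟩ | ⟨_⟩ := t
  · rfl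
  obtain ⟨_⟩ | ⟨_⟩ := t'
  · exact hprimed.elim
  · exact absurd (M.adj_sub hadj) hvΔ

theorem isCopy_getLast_eq_false {w : V} {hw : w ∈ Nside G y x ∪ Delta G x y}
    (hwΔ : w ∉ Delta G x y) {a : TBX G x y m} {L : List (TBX G x y m)}
    (hc : ChainM G x y m M a L (Sum.inl ⟨w, hw⟩)) (hL : L ≠ []) :
    isCopy G x y m (L.getLast hL) = false := by
  induction L generalizing a with
  | nil => exact absurd rfl hL
  | cons t L ih =>
    obtain _ | ⟨_, _, hc'⟩ := hc
    cases L with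
    | nil =>
      obtain ⟨hadj⟩ := hc'
      obtain ⟨_⟩ | ⟨_⟩ := t
      · rfl
      · exact absurd (M.adj_sub hadj) hwΔ
    | cons s L => simpa [List.getLast_cons] using ih hc' (List.cons_ne_nil s L)

theorem exists_walk_of_forall_isCopy_eq_false {a b : V} {ha : a ∈ Nside G x y ∪ Delta G x y}
    {hb : b ∈ Nside G y x ∪ Delta G x y} {L : List (TBX G x y m)}
    (hc : ChainM G x y m M (Sum.inl ⟨a, ha⟩) L (Sum.inl ⟨b, hb⟩))
    (hL : ∀ t ∈ L, isCopy G x y m t = false) :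
    ∃ p : G.Walk a b, p.length ≤ L.length + 1 := by
  induction L generalizing a with
  | nil =>
    obtain ⟨hadj⟩ := hc
    exact exists_walk_length_le_one_of_adj_or_eq (M.adj_sub hadj)
  | cons t L ih =>
    obtain _ | @⟨_, _, t', _, _, hadj, hprimed, hc'⟩ := hc
    obtain ⟨⟨u, hu⟩⟩ | ⟨_⟩ := t
    · obtain ⟨⟨u', hu'⟩⟩ | ⟨_⟩ := t'
      · obtain rfl : u = u' := hprimed
        obtain ⟨p, hp⟩ := exists_walk_length_le_one_of_adj_or_eq (M.adj_sub hadj)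
        obtain ⟨q, hq⟩ := ih hc' fun t ht => hL t (List.mem_cons_of_mem _ ht)
        refine ⟨p.append q, ?_⟩
        simp only [SimpleGraph.Walk.length_append, List.length_cons]
        omega
      · exact hprimed.elim
    · exact absurd (hL _ List.mem_cons_self) (by simp [isCopy])

end ChainM

end Transport

theorem stmt7_general [Fintype V] [DecidableEq V] (G : SimpleGraph V) [DecidableRel G.Adj]
    (α β : ℕ)
    (x y : V) (hxy : G.Adj x y)
    (M : (TBGraph G x y (β - α - 1)).Subgraph)
    (v₀ w₀ : V) (hv₀ : v₀ ∈ Nside G x y) (hw₀ : w₀ ∈ Nside G y x)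
    (L : List (TBX G x y (β - α - 1)))
    (hc : ChainM G x y (β - α - 1) M (Sum.inl ⟨v₀, Finset.mem_union_left _ hv₀⟩) L
      (Sum.inl ⟨w₀, Finset.mem_union_left _ hw₀⟩)) :
    G.dist v₀ w₀ ≤ (L.length + 1) - L.countP (isCopy G x y (β - α - 1)) := by
  have hv₀Δ : v₀ ∉ Delta G x y := notMem_Delta_of_mem_Nside hv₀
  have hw₀Δ : w₀ ∉ Delta G x y := Delta_comm (G := G) x y ▸ notMem_Delta_of_mem_Nside hw₀
  by_cases hlen : 2 ≤ L.length
  · have hL : L ≠ [] := by rintro rfl; simp at hlen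
    have hcount := List.countP_add_two_le_length hL (hc.isCopy_head_eq_false hv₀Δ hL)
      (hc.isCopy_getLast_eq_false hw₀Δ hL) hlen
    have hdist : G.dist v₀ w₀ ≤ 3 := SimpleGraph.dist_le <|
      (adj_of_mem_Nside hv₀).symm.toWalk.append <| hxy.toWalk.append (adj_of_mem_Nside hw₀).toWalk
    omega
  · have hnoCopy : ∀ t ∈ L, isCopy G x y (β - α - 1) t = false := by
      obtain _ | ⟨t, _ | ⟨s, L'⟩⟩ := L
      · simp
      · simpa using hc.isCopy_head_eq_false hv₀Δ (List.cons_ne_nil t [])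
      · simp at hlen
    obtain ⟨p, hp⟩ := hc.exists_walk_of_forall_isCopy_eq_false hnoCopy
    rw [List.countP_eq_zero.mpr fun t ht => by simp [hnoCopy t ht]]
    exact (SimpleGraph.dist_le p).trans hp

/-- If `v_0 ∈ N_x` and `w_0 ∈ N_y` are joined by a reachable-chain
`C = (v_0, t_1, …, t_j, w_0)` in a perfect matching `M`, then
`d(v_0, w_0) ≤ ρ_M(v_0, w_0) - k` where `ρ_M(v_0, w_0) = j + 1` is the reachable-distance
and `k = |C ∩ {x_1, …, x_{β-α-1}}|`. -/
theorem stmt7 [Fintype V] [DecidableEq V] (G : SimpleGraph V) [DecidableRel G.Adj]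
    (n d α β : ℕ) (h : IsAmplyRegular G n d α β) (hβα : α < β) (hα : 1 ≤ α)
    (x y : V) (hxy : G.Adj x y)
    (M : (TBGraph G x y (β - α - 1)).Subgraph) (hM : M.IsPerfectMatching)
    (v₀ w₀ : V) (hv₀ : v₀ ∈ Nside G x y) (hw₀ : w₀ ∈ Nside G y x)
    (L : List (TBX G x y (β - α - 1)))
    (hc : ChainM G x y (β - α - 1) M (Sum.inl ⟨v₀, Finset.mem_union_left _ hv₀⟩) L
      (Sum.inl ⟨w₀, Finset.mem_union_left _ hw₀⟩)) :
    G.dist v₀ w₀ ≤ (L.length + 1) - L.countP (isCopy G x y (β - α - 1)) :=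
  stmt7_general G α β x y hxy M v₀ w₀ hv₀ hw₀ L hc
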